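/- arXiv:0707.1102 — 2 statements merged into one kernel-verified Lean document; each statement's English description precedes it below -/
import Mathlib

section
/- Let p be a prime, let n, k be positive integers with (p - 1) ∤ k, and let a be a nonzero element of F_p. If x^n·(x^k + a) is a permutation polynomial of F_p, then gcd(k, p - 1) ≠ 4. -/
/-!
Let `d = gcd(k, p - 1)`, `p - 1 = d e`, `k = d κ`, so `gcd(κ, e) = 1`. If `2 ≤ d` and `d² < p - 1`,
choose `s > 0` such that `[0, d s]` contains exactly one `c` with `e ∣ n s + κ c`; this is possible
because `d < e`. As `0 < d s < p - 1`, Hermite's criterion gives `∑ₓ f(x)^(d s) = 0` for the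
permutation `f = x^n (x^k + a)`. Expanding binomially, `∑ₓ x^(n d s + k i)` is `-1` if `i = c` and
`0` otherwise, so the sum is `-a^(d s - c) (d s).choose c`, nonzero since `d s < p`.
For `d = 4` this leaves `p ∈ {5, 13, 17}`: `p = 5` is the trivial case, and `13, 17` are checked
exhaustively, exponents mattering only modulo `p - 1`.
-/

open Polynomial Finset Function

namespace FiniteField

variable {K : Type*} [Field K] [Fintype K]

theorem pow_eq_pow_of_modEq (x : K) {r t : ℕ} (h : r ≡ t [MOD Fintype.card K - 1])
    (hr : r ≠ 0) (ht : t ≠ 0) : x ^ r = x ^ t := by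
  rcases eq_or_ne x 0 with rfl | hx
  · rw [zero_pow hr, zero_pow ht]
  classical
  have hord : orderOf (Units.mk0 x hx) ∣ Fintype.card K - 1 :=
    Fintype.card_units (α := K) ▸ orderOf_dvd_card
  simpa using congrArg Units.val (pow_eq_pow_iff_modEq.mpr (h.of_dvd hord))

theorem sum_pow_of_ne_zero {i : ℕ} (hi : i ≠ 0) :
    ∑ x : K, x ^ i = if Fintype.card K - 1 ∣ i then -1 else 0 := by
  classical
  rw [← sum_pow_units, ← Fintype.sum_subtype_add_sum_subtype (· = 0),
    ← Fintype.sum_equiv unitsEquivNeZero (fun x : Kˣ => (x : K) ^ i) _ (fun _ => rfl)]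
  simp [hi, (default : {x : K // x = 0}).2]

theorem sum_pow_mul_pow_add_pow {n t : ℕ} (hn : n ≠ 0) (ht : t ≠ 0) (k : ℕ) (a : K) :
    ∑ x : K, (x ^ n * (x ^ k + a)) ^ t = ∑ i ∈ range (t + 1),
      a ^ (t - i) * t.choose i * if Fintype.card K - 1 ∣ n * t + k * i then -1 else 0 := by
  have hexp (x : K) : (x ^ n * (x ^ k + a)) ^ t =
      ∑ i ∈ range (t + 1), a ^ (t - i) * t.choose i * x ^ (n * t + k * i) := by
    rw [mul_pow, ← pow_mul, add_pow, mul_sum]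
    refine sum_congr rfl fun i _ => ?_
    rw [pow_add, ← pow_mul]
    ring
  simp only [hexp]
  rw [sum_comm]
  refine sum_congr rfl fun i _ => ?_
  rw [← mul_sum, sum_pow_of_ne_zero (by positivity)]

end FiniteField

namespace ZMod

theorem exists_val_mul_le_lt {d e : ℕ} [NeZero e] (hde : d < e) (μ : ZMod e) :
    ∃ s : ℕ, 0 < s ∧ (μ * s).val ≤ d * s ∧ d * s < (μ * s).val + e := by
  by_cases hμ : μ.val ≤ d
  · refine ⟨1, one_pos, ?_, ?_⟩ <;> rw [Nat.cast_one, mul_one, mul_one] <;> omega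
  have hex : ∃ s : ℕ, 0 < s ∧ (μ * s).val ≤ d * s := ⟨e, NeZero.pos e, by simp⟩
  obtain ⟨hs, hle⟩ := Nat.find_spec hex
  refine ⟨_, hs, hle, ?_⟩
  obtain ⟨t, ht⟩ := Nat.exists_eq_add_one_of_ne_zero hs.ne'
  have ht0 : t ≠ 0 := by
    rintro rfl
    rw [ht, zero_add, Nat.cast_one, mul_one, mul_one] at hle
    omega
  have hprev : d * t < (μ * t).val := by
    have := Nat.find_min hex (show t < Nat.find hex by omega)
    exact lt_of_not_ge fun h => this ⟨Nat.pos_of_ne_zero ht0, h⟩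
  have hstep : (μ * t).val + μ.val ≤ (μ * t + μ).val + e := by
    rcases lt_or_ge ((μ * t).val + μ.val) e with h | h
    · rw [val_add_of_lt h]; omega
    · rw [val_add_val_of_le h]
  rw [ht, Nat.cast_succ, mul_add_one, mul_add_one]
  omega

theorem mul_dvd_iff_natCast_eq {d e n κ s i : ℕ} (hd : 0 < d) (hκ : κ.Coprime e) :
    d * e ∣ n * (d * s) + d * κ * i ↔ (i : ZMod e) = -n * (κ : ZMod e)⁻¹ * s := by
  have hinv : (κ : ZMod e) * (κ : ZMod e)⁻¹ = 1 := coe_mul_inv_eq_one κ hκ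
  rw [show n * (d * s) + d * κ * i = d * (n * s + κ * i) by ring,
    Nat.mul_dvd_mul_iff_left hd, ← natCast_eq_zero_iff]
  push_cast
  constructor
  · intro h
    linear_combination (κ : ZMod e)⁻¹ * h - (i : ZMod e) * hinv
  · intro h
    linear_combination (κ : ZMod e) * h - (n * s : ZMod e) * hinv

theorem eq_val_of_natCast_eq {e i : ℕ} (μ : ZMod e) [NeZero e] (h : (i : ZMod e) = μ)
    (hi : i < μ.val + e) : i = μ.val := by
  rw [← natCast_zmod_val μ, natCast_eq_natCast_iff] at h
  refine h.eq_of_abs_lt ?_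
  have := μ.val_lt
  rw [abs_sub_lt_iff]
  omega

variable {p : ℕ} [Fact p.Prime]

theorem not_bijective_pow_mul_pow_add_of_sq_gcd_lt {n k : ℕ} (hn : n ≠ 0)
    (hd : 2 ≤ k.gcd (p - 1)) (hsq : k.gcd (p - 1) ^ 2 < p - 1) {a : ZMod p} (ha : a ≠ 0) :
    ¬ Bijective fun x : ZMod p => x ^ n * (x ^ k + a) := by
  intro hbij
  set d := k.gcd (p - 1)
  have hd0 : 0 < d := by omega
  set e := (p - 1) / d
  set κ := k / d
  have hpe : p - 1 = d * e := (Nat.mul_div_cancel' (Nat.gcd_dvd_right k (p - 1))).symm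
  have hkκ : k = d * κ := (Nat.mul_div_cancel' (Nat.gcd_dvd_left k (p - 1))).symm
  have hκe : κ.Coprime e := Nat.coprime_div_gcd_div_gcd hd0
  have hde : d < e := by nlinarith
  have : NeZero e := ⟨by omega⟩
  set μ : ZMod e := -n * (κ : ZMod e)⁻¹
  obtain ⟨s, hs, hcs, hsc⟩ := exists_val_mul_le_lt hde μ
  set c := (μ * (s : ZMod e)).val
  have hsingle (i : ℕ) (hi : i ≤ d * s) : p - 1 ∣ n * (d * s) + k * i ↔ i = c := by
    rw [hpe, hkκ, mul_dvd_iff_natCast_eq hd0 hκe]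
    exact ⟨fun h => eq_val_of_natCast_eq _ h (by omega), fun h => h ▸ natCast_zmod_val _⟩
  have hdsp : d * s < p - 1 := by nlinarith [val_lt (μ * (s : ZMod e))]
  have hvanish : ∑ x : ZMod p, (x ^ n * (x ^ k + a)) ^ (d * s) = 0 := by
    rw [hbij.sum_comp (· ^ (d * s))]
    exact FiniteField.sum_pow_lt_card_sub_one _ _ (by rwa [card])
  have hsum : ∑ x : ZMod p, (x ^ n * (x ^ k + a)) ^ (d * s) =
      -(a ^ (d * s - c) * (d * s).choose c) := by
    rw [FiniteField.sum_pow_mul_pow_add_pow hn (by positivity),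
      sum_eq_single_of_mem c (mem_range.mpr (by omega)) fun i hi hic => by
        rw [card, if_neg ((hsingle i (by simpa [Nat.lt_succ_iff] using hi)).not.mpr hic),
          mul_zero],
      card, if_pos ((hsingle c hcs).mpr rfl), mul_neg_one]
  have hchoose : ((d * s).choose c : ZMod p) ≠ 0 := by
    rw [Ne, natCast_eq_zero_iff]
    have hp : p.Prime := Fact.out
    exact hp.coprime_iff_not_dvd.mp (hp.coprime_choose_of_lt (by omega) hcs)
  exact mul_ne_zero (pow_ne_zero _ ha) hchoose (neg_eq_zero.mp (hsum ▸ hvanish))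

theorem not_bijective_pow_mul_pow_add_of_forall_mem_Icc {d n k : ℕ}
    (hsmall : ∀ n ∈ Icc 1 (p - 1), ∀ k ∈ Icc 1 (p - 1), k.gcd (p - 1) = d →
      ∀ a : ZMod p, a ≠ 0 → ¬ Bijective fun x : ZMod p => x ^ n * (x ^ k + a))
    (hn : n ≠ 0) (hk : k ≠ 0) (hgcd : k.gcd (p - 1) = d) {a : ZMod p} (ha : a ≠ 0) :
    ¬ Bijective fun x : ZMod p => x ^ n * (x ^ k + a) := by
  have hp := (Fact.out : p.Prime).two_le
  have hrep (m : ℕ) (hm : m ≠ 0) :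
      m ≡ (m - 1) % (p - 1) + 1 [MOD p - 1] ∧ (m - 1) % (p - 1) + 1 ∈ Icc 1 (p - 1) := by
    refine ⟨?_, mem_Icc.mpr ⟨by omega, Nat.mod_lt _ (by omega)⟩⟩
    simpa [Nat.sub_add_cancel (Nat.pos_of_ne_zero hm)] using
      (Nat.mod_modEq (m - 1) (p - 1)).symm.add_right 1
  have hpow (x : ZMod p) {m : ℕ} (hm : m ≠ 0) : x ^ m = x ^ ((m - 1) % (p - 1) + 1) :=
    FiniteField.pow_eq_pow_of_modEq x (by rw [card]; exact (hrep m hm).1) hm (by omega)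
  convert hsmall _ (hrep n hn).2 _ (hrep k hk).2 ((hrep k hk).1.gcd_eq ▸ hgcd) a ha using 3 with x
  rw [hpow x hn, hpow x hk]

theorem not_bijective_pow_mul_pow_add_thirteen : ∀ n ∈ Icc 1 (13 - 1), ∀ k ∈ Icc 1 (13 - 1),
    k.gcd (13 - 1) = 4 → ∀ a : ZMod 13, a ≠ 0 →
      ¬ Bijective fun x : ZMod 13 => x ^ n * (x ^ k + a) := by
  decide

theorem not_bijective_pow_mul_pow_add_seventeen : ∀ n ∈ Icc 1 (17 - 1), ∀ k ∈ Icc 1 (17 - 1),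
    k.gcd (17 - 1) = 4 → ∀ a : ZMod 17, a ≠ 0 →
      ¬ Bijective fun x : ZMod 17 => x ^ n * (x ^ k + a) := by
  decide

end ZMod

theorem stmt_7_general (p : ℕ) (hp : p.Prime)
    (n k : ℕ) (hn : 0 < n) (hnontriv : ¬ (p - 1) ∣ k)
    (a : ZMod p) (ha : a ≠ 0)
    (hperm : Function.Bijective
      (fun x : ZMod p => Polynomial.eval x (X ^ n * (X ^ k + C a)))) :
    Nat.gcd k (p - 1) ≠ 4 := by
  intro hgcd
  have : Fact p.Prime := ⟨hp⟩
  simp only [eval_mul, eval_pow, eval_add, eval_C, eval_X] at hperm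
  have hk0 : k ≠ 0 := by rintro rfl; exact hnontriv (dvd_zero _)
  obtain ⟨e, he⟩ : 4 ∣ p - 1 := hgcd ▸ Nat.gcd_dvd_right k (p - 1)
  have hp2 := hp.two_le
  rcases lt_or_ge e 5 with he5 | he5
  · interval_cases e
    · omega
    · exact hnontriv (by simpa [he] using hgcd ▸ Nat.gcd_dvd_left k (p - 1))
    · exact absurd (show p = 9 by omega ▸ hp) (by norm_num)
    · obtain rfl : p = 13 := by omega
      exact ZMod.not_bijective_pow_mul_pow_add_of_forall_mem_Icc
        ZMod.not_bijective_pow_mul_pow_add_thirteen hn.ne' hk0 hgcd ha hperm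
    · obtain rfl : p = 17 := by omega
      exact ZMod.not_bijective_pow_mul_pow_add_of_forall_mem_Icc
        ZMod.not_bijective_pow_mul_pow_add_seventeen hn.ne' hk0 hgcd ha hperm
  · exact ZMod.not_bijective_pow_mul_pow_add_of_sq_gcd_lt hn.ne' (by omega) (by rw [hgcd]; omega)
      ha hperm

theorem stmt_7 (p : ℕ) (hp : p.Prime)
    (n k : ℕ) (hn : 0 < n) (hk : 0 < k) (hnontriv : ¬ (p - 1) ∣ k)
    (a : ZMod p) (ha : a ≠ 0)
    (hperm : Function.Bijective
      (fun x : ZMod p => Polynomial.eval x (X ^ n * (X ^ k + C a)))) :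
    Nat.gcd k (p - 1) ≠ 4 :=
  stmt_7_general p hp n k hn hnontriv a ha hperm
end

section
/- Let p = 2ℓ + 1 be a prime with ℓ > 1 odd, let n be an odd positive integer, and let a be a nonzero element of F_p. Then for f = x^n·(x^2 + a), the remainder of f^{ℓ-1} upon division by x^p - x has degree equal to p - 1; in particular f is not a permutation polynomial of F_p. -/
/-!
Over a finite field with `q` elements, `∑ₓ xᵉ` is `-1` when `e > 0` and `q - 1 ∣ e`, and `0`
otherwise. Hence the coefficient of `x^(q-1)` in the remainder of `g` modulo `x^q - x` (which has the
same values as `g`) is `-∑ₓ g(x)`, and for a permutation `f` the sum `∑ₓ f(x)^i` vanishes when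
`i < q - 1`. For `f = xⁿ(x² + a)`, `q = 2ℓ + 1` and `ℓ - 1 = 2m`, the binomial theorem writes
`f^(ℓ-1)` as a combination of the monomials `x^(2(nm + k))`, `0 ≤ k < ℓ`; exactly one exponent is
divisible by `2ℓ`, so `∑ₓ f(x)^(ℓ-1) = -binom(ℓ-1, k) a^(ℓ-1-k)`, which is nonzero in `F_p` as
`ℓ - 1 < p`.
-/

open Polynomial Finset

theorem Nat.exists_lt_forall_dvd_add_iff_eq {ℓ : ℕ} (hℓ : 0 < ℓ) (t : ℕ) :
    ∃ k₀ < ℓ, ∀ k < ℓ, ℓ ∣ t + k ↔ k = k₀ := by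
  have := NeZero.of_pos hℓ
  refine ⟨(-(t : ZMod ℓ)).val, ZMod.val_lt _, fun k hk ↦ ?_⟩
  rw [← ZMod.natCast_eq_zero_iff, Nat.cast_add, add_eq_zero_iff_eq_neg']
  constructor
  · intro h; rw [← h, ZMod.val_natCast_of_lt hk]
  · rintro rfl; simp

namespace FiniteField

variable {K : Type*} [Field K] [Fintype K]

theorem sum_pow_eq_ite (e : ℕ) :
    ∑ x : K, x ^ e = if 0 < e ∧ Fintype.card K - 1 ∣ e then -1 else 0 := by
  classical
  rcases e.eq_zero_or_pos with rfl | he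
  · simp
  have hunits : ∑ x : K, x ^ e = ∑ x : Kˣ, (x : K) ^ e :=
    (Fintype.sum_of_injective _ Units.val_injective _ _
      (fun y hy ↦ by
        obtain rfl : y = 0 := by_contra fun hy0 ↦ hy ⟨Units.mk0 y hy0, rfl⟩
        exact zero_pow he.ne')
      (fun _ ↦ rfl)).symm
  rw [hunits, sum_pow_units]
  simp [he]

theorem sum_pow_card_sub_one : ∑ x : K, x ^ (Fintype.card K - 1) = -1 := by
  rw [sum_pow_eq_ite, if_pos ⟨Nat.sub_pos_of_lt Fintype.one_lt_card, dvd_rfl⟩]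

theorem sum_eval_eq_neg_coeff {h : K[X]} (hh : h.natDegree < Fintype.card K) :
    ∑ x : K, h.eval x = -h.coeff (Fintype.card K - 1) := by
  set q := Fintype.card K
  have hq : q - 1 + 1 = q := Nat.sub_add_cancel Fintype.card_pos
  calc ∑ x : K, h.eval x = ∑ i ∈ range q, h.coeff i * ∑ x : K, x ^ i := by
        simp_rw [eval_eq_sum_range' hh, mul_sum]
        exact sum_comm
    _ = -h.coeff (q - 1) := by
        rw [← hq, sum_range_succ, hq, sum_pow_card_sub_one,
          sum_eq_zero fun i hi ↦ by rw [sum_pow_lt_card_sub_one K i (mem_range.1 hi), mul_zero]]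
        ring

theorem monic_X_pow_card_sub_X : (X ^ Fintype.card K - X : K[X]).Monic :=
  monic_X_pow_sub (by rw [degree_X]; exact_mod_cast Fintype.one_lt_card)

theorem natDegree_modByMonic_X_pow_card_sub_X_lt (g : K[X]) :
    (g %ₘ (X ^ Fintype.card K - X)).natDegree < Fintype.card K := by
  have hdeg := X_pow_card_sub_X_natDegree_eq K (Fintype.one_lt_card (α := K))
  have hne_one : (X ^ Fintype.card K - X : K[X]) ≠ 1 := fun h ↦ by
    simp [h, eq_comm, Fintype.card_ne_zero] at hdeg
  calc _ < _ := natDegree_modByMonic_lt g monic_X_pow_card_sub_X hne_one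
    _ = _ := hdeg

theorem eval_modByMonic_X_pow_card_sub_X (g : K[X]) (x : K) :
    (g %ₘ (X ^ Fintype.card K - X)).eval x = g.eval x := by
  conv_rhs => rw [← modByMonic_add_div g (X ^ Fintype.card K - X)]
  simp [pow_card]

theorem coeff_modByMonic_X_pow_card_sub_X (g : K[X]) :
    (g %ₘ (X ^ Fintype.card K - X)).coeff (Fintype.card K - 1) = -∑ x : K, g.eval x := by
  rw [← neg_eq_iff_eq_neg, ← sum_eval_eq_neg_coeff (natDegree_modByMonic_X_pow_card_sub_X_lt g)]
  simp_rw [eval_modByMonic_X_pow_card_sub_X]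

theorem degree_modByMonic_X_pow_card_sub_X {g : K[X]} (hg : ∑ x : K, g.eval x ≠ 0) :
    (g %ₘ (X ^ Fintype.card K - X)).degree = (Fintype.card K - 1 : ℕ) := by
  refine degree_eq_of_le_of_coeff_ne_zero (degree_le_of_natDegree_le ?_) ?_
  · exact Nat.le_sub_one_of_lt (natDegree_modByMonic_X_pow_card_sub_X_lt g)
  · rwa [coeff_modByMonic_X_pow_card_sub_X, neg_ne_zero]

theorem sum_pow_comp_eq_zero_of_bijective {f : K → K} (hf : Function.Bijective f) {i : ℕ}
    (hi : i < Fintype.card K - 1) : ∑ x : K, f x ^ i = 0 := by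
  rw [hf.sum_comp (· ^ i)]
  exact sum_pow_lt_card_sub_one K i hi

theorem exists_sum_pow_mul_sq_add_pow_eq {ℓ t : ℕ} (hK : Fintype.card K = 2 * ℓ + 1)
    (ht : 0 < t) (a : K) :
    ∃ k < ℓ, ∑ x : K, x ^ (2 * t) * (x ^ 2 + a) ^ (ℓ - 1)
      = -(a ^ (ℓ - 1 - k) * (ℓ - 1).choose k) := by
  have hℓ : 0 < ℓ := by have := Fintype.one_lt_card (α := K); omega
  obtain ⟨k₀, hk₀, hk₀_iff⟩ := Nat.exists_lt_forall_dvd_add_iff_eq hℓ t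
  have hpow : ∀ k < ℓ, ∑ x : K, x ^ (2 * (t + k)) = if k = k₀ then -1 else 0 := fun k hk ↦ by
    rw [sum_pow_eq_ite, hK, Nat.add_sub_cancel]
    refine if_congr ?_ rfl rfl
    rw [Nat.mul_dvd_mul_iff_left two_pos, hk₀_iff k hk, and_iff_right (by positivity)]
  refine ⟨k₀, hk₀, ?_⟩
  calc ∑ x : K, x ^ (2 * t) * (x ^ 2 + a) ^ (ℓ - 1)
      = ∑ k ∈ range ℓ, a ^ (ℓ - 1 - k) * (ℓ - 1).choose k * ∑ x : K, x ^ (2 * (t + k)) := by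
        simp_rw [add_pow, Nat.sub_add_cancel hℓ, mul_sum]
        rw [sum_comm]
        refine sum_congr rfl fun k _ ↦ sum_congr rfl fun x _ ↦ ?_
        ring
    _ = -(a ^ (ℓ - 1 - k₀) * (ℓ - 1).choose k₀) := by
        rw [sum_congr rfl fun k hk ↦ by rw [hpow k (mem_range.1 hk), mul_ite, mul_neg_one, mul_zero],
          sum_ite_eq' (range ℓ), if_pos (mem_range.2 hk₀)]

end FiniteField

theorem stmt_13_general (p ℓ : ℕ) (hp : p.Prime) (hpl : p = 2 * ℓ + 1)
    (hl1 : 1 < ℓ) (hlodd : Odd ℓ)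
    (n : ℕ) (hn : 0 < n)
    (a : ZMod p) (ha : a ≠ 0) :
    (((X ^ n * (X ^ 2 + C a)) ^ (ℓ - 1) %ₘ (X ^ p - X)).degree
        = ((p - 1 : ℕ) : WithBot ℕ)) ∧
      ¬ Function.Bijective
        (fun x : ZMod p => Polynomial.eval x (X ^ n * (X ^ 2 + C a))) := by
  have : Fact p.Prime := ⟨hp⟩
  obtain ⟨m, hm⟩ := hlodd
  set f : (ZMod p)[X] := X ^ n * (X ^ 2 + C a)
  have hsum : ∑ x : ZMod p, (f ^ (ℓ - 1)).eval x ≠ 0 := by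
    obtain ⟨k, hk, hk_sum⟩ := FiniteField.exists_sum_pow_mul_sq_add_pow_eq
      (by rw [ZMod.card, hpl]) (Nat.mul_pos hn (by omega : 0 < m)) a
    have hf : ∀ x, (f ^ (ℓ - 1)).eval x = x ^ (2 * (n * m)) * (x ^ 2 + a) ^ (ℓ - 1) := fun x ↦ by
      simp only [f, eval_pow, eval_mul, eval_add, eval_X, eval_C, mul_pow, ← pow_mul, hm,
        Nat.add_sub_cancel]
      ring
    simp_rw [hf, hk_sum, neg_ne_zero]
    refine mul_ne_zero (pow_ne_zero _ ha) ?_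
    rw [Ne, ZMod.natCast_eq_zero_iff, ← hp.coprime_iff_not_dvd]
    exact hp.coprime_choose_of_lt (by omega) (by omega)
  refine ⟨by simpa [ZMod.card] using FiniteField.degree_modByMonic_X_pow_card_sub_X hsum,
    fun hbij ↦ hsum ?_⟩
  simpa [f] using FiniteField.sum_pow_comp_eq_zero_of_bijective hbij (i := ℓ - 1)
    (by rw [ZMod.card]; omega)

theorem stmt_13 (p ℓ : ℕ) (hp : p.Prime) (hpl : p = 2 * ℓ + 1)
    (hl1 : 1 < ℓ) (hlodd : Odd ℓ)
    (n : ℕ) (hn : 0 < n) (hnodd : Odd n)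
    (a : ZMod p) (ha : a ≠ 0) :
    (((X ^ n * (X ^ 2 + C a)) ^ (ℓ - 1) %ₘ (X ^ p - X)).degree
        = ((p - 1 : ℕ) : WithBot ℕ)) ∧
      ¬ Function.Bijective
        (fun x : ZMod p => Polynomial.eval x (X ^ n * (X ^ 2 + C a))) :=
  stmt_13_general p ℓ hp hpl hl1 hlodd n hn a ha
end
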